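/- arXiv:2004.04766 — 3 statements merged into one kernel-verified Lean document; each statement's English description precedes it below -/
import Mathlib

section
/- Uniformly for integers m ≥ 1, n ≥ 1, and real y ≥ 1, one has ∑_{δ ≤ y, δ | m^∞, gcd(δ,n)=1} 1/δ = ∏_{p | m, p ∤ n} (1 - 1/p)^{-1} + O(b_{3/4}(m) / y^{1/4}), where the implied constant is absolute. -/
/-!
Over `P = {p ∣ m, p ∤ n}` the sum runs over the `P`-factored numbers `δ ≤ y`, and the full series
`∑ δ⁻¹` is the Euler product `∏_{p ∈ P} (1 - 1/p)⁻¹`. Rankin's trick bounds the tail `δ > y` by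
`y^{-1/4} ∑ δ^{-3/4} = y^{-1/4} ∏_{p ∈ P} (1 - p^{-3/4})⁻¹`. Each factor is at most
`exp (2 p^{-3/2}) (1 + p^{-3/4})`; the exponentials multiply to a constant because `∑ p^{-3/2}`
converges, and the remaining product is at most `b_{3/4}(m)`.
-/

open Finset Real

noncomputable def bFactor (α : ℝ) (m : ℕ) : ℝ :=
  ∏ p ∈ m.primeFactors, (1 + (p : ℝ) ^ (-α))

theorem mem_factoredNumbers_filter_not_dvd_iff {m n δ : ℕ} (hδ : δ ≠ 0) :
    δ ∈ Nat.factoredNumbers {p ∈ m.primeFactors | ¬ p ∣ n} ↔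
      δ.primeFactors ⊆ m.primeFactors ∧ δ.Coprime n := by
  rw [Nat.mem_factoredNumbers_iff_primeFactors_subset, ← not_not (a := δ.Coprime n),
    Nat.Prime.not_coprime_iff_dvd]
  simp only [subset_iff, mem_filter, Nat.mem_primeFactors]
  grind

noncomputable def natRpowNegHom (α : ℝ) : ℕ →* ℝ where
  toFun k := (k : ℝ) ^ (-α)
  map_one' := by simp
  map_mul' a b := by push_cast; exact mul_rpow a.cast_nonneg b.cast_nonneg

theorem hasSum_indicator_factoredNumbers_rpow_neg {α : ℝ} (hα : 0 < α) {s : Finset ℕ}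
    (hs : ∀ p ∈ s, p.Prime) :
    HasSum ((Nat.factoredNumbers s).indicator fun k : ℕ ↦ (k : ℝ) ^ (-α))
      (∏ p ∈ s, (1 - (p : ℝ) ^ (-α))⁻¹) := by
  have hlt {p : ℕ} (hp : p.Prime) : ‖natRpowNegHom α p‖ < 1 := by
    change ‖(p : ℝ) ^ (-α)‖ < 1
    rw [norm_of_nonneg (rpow_nonneg p.cast_nonneg _)]
    exact rpow_lt_one_of_one_lt_of_neg (mod_cast hp.one_lt) (neg_neg_of_pos hα)
  have h := (EulerProduct.summable_and_hasSum_factoredNumbers_prod_filter_prime_geometric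
    hlt s).2
  rw [filter_true_of_mem hs] at h
  exact hasSum_subtype_iff_indicator.1 h

theorem rpow_neg_le_rpow_sub_mul_rpow_neg {x y α β : ℝ} (hy : 0 < y) (hyx : y ≤ x)
    (hβα : β ≤ α) : x ^ (-α) ≤ y ^ (β - α) * x ^ (-β) := by
  have hx : 0 < x := hy.trans_le hyx
  rw [show -α = (β - α) + -β by ring, rpow_add hx]
  exact mul_le_mul_of_nonneg_right (rpow_le_rpow_of_nonpos hy hyx (by linarith))
    (rpow_nonneg hx.le _)

theorem abs_sum_Icc_floor_sub_le {S : Set ℕ} {α β y A B : ℝ} (hβ : 0 < β) (hβα : β ≤ α)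
    (hy : 0 < y) (hA : HasSum (S.indicator fun k : ℕ ↦ (k : ℝ) ^ (-α)) A)
    (hB : HasSum (S.indicator fun k : ℕ ↦ (k : ℝ) ^ (-β)) B) :
    |∑ k ∈ Icc 1 ⌊y⌋₊, S.indicator (fun k : ℕ ↦ (k : ℝ) ^ (-α)) k - A| ≤ y ^ (β - α) * B := by
  set g := S.indicator fun k : ℕ ↦ (k : ℝ) ^ (-α)
  set h := S.indicator fun k : ℕ ↦ (k : ℝ) ^ (-β)
  set I := Icc 1 ⌊y⌋₊
  have hg : ∀ k, 0 ≤ g k := Set.indicator_nonneg fun k _ ↦ rpow_nonneg k.cast_nonneg _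
  have hh : ∀ k, 0 ≤ h k := Set.indicator_nonneg fun k _ ↦ rpow_nonneg k.cast_nonneg _
  have hI : HasSum ((I : Set ℕ).indicator g) (∑ k ∈ I, g k) :=
    hasSum_subtype_iff_indicator.1 (I.hasSum g)
  have htail : ∀ k, g k - (I : Set ℕ).indicator g k ≤ y ^ (β - α) * h k := by
    intro k
    by_cases hkI : k ∈ I
    · rw [Set.indicator_of_mem hkI, sub_self]
      exact mul_nonneg (rpow_nonneg hy.le _) (hh k)
    rw [Set.indicator_of_notMem hkI, sub_zero]
    by_cases hkS : k ∈ S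
    · simp only [g, h, Set.indicator_of_mem hkS]
      rcases Nat.eq_zero_or_pos k with rfl | hk
      · rw [Nat.cast_zero, zero_rpow (by linarith), zero_rpow (by linarith), mul_zero]
      · have hyk : y ≤ k := by
          have : ⌊y⌋₊ < k := by simp only [I, mem_Icc, not_and, not_le] at hkI; exact hkI hk
          exact (Nat.lt_floor_add_one y).le.trans (mod_cast this)
        exact rpow_neg_le_rpow_sub_mul_rpow_neg hy hyk hβα
    · simp only [g, h, Set.indicator_of_notMem hkS, mul_zero, le_refl]
  rw [abs_sub_comm, abs_of_nonneg (sub_nonneg.2 (sum_le_hasSum I (fun k _ ↦ hg k) hA))]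
  exact hasSum_le htail (hA.sub hI) (hB.mul_left _)

theorem inv_one_sub_le_exp_two_mul {t : ℝ} (ht₀ : 0 ≤ t) (ht : t ≤ 1 / 2) :
    (1 - t)⁻¹ ≤ exp (2 * t) := by
  rw [inv_le_iff_one_le_mul₀ (by linarith)]
  nlinarith [add_one_le_exp (2 * t)]

theorem inv_one_sub_le_exp_sq_mul_one_add {x : ℝ} (hx₀ : 0 ≤ x) (hx : x ^ 2 ≤ 1 / 2) :
    (1 - x)⁻¹ ≤ exp (2 * x ^ 2) * (1 + x) := by
  have hx1 : x < 1 := by nlinarith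
  calc (1 - x)⁻¹ = (1 - x ^ 2)⁻¹ * (1 + x) := by
        field_simp [(by linarith : (1 - x) ≠ 0), (by nlinarith : (1 - x ^ 2) ≠ 0)]; ring
    _ ≤ exp (2 * x ^ 2) * (1 + x) := by
        gcongr; exact inv_one_sub_le_exp_two_mul (sq_nonneg x) hx

theorem prod_inv_one_sub_rpow_neg_le {σ : ℝ} (hσ : 1 / 2 < σ) {s : Finset ℕ}
    (hs : ∀ p ∈ s, p.Prime) :
    ∏ p ∈ s, (1 - (p : ℝ) ^ (-σ))⁻¹ ≤
      exp (2 * ∑' k : ℕ, (k : ℝ) ^ (-(2 * σ))) * ∏ p ∈ s, (1 + (p : ℝ) ^ (-σ)) := by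
  have hfactor : ∀ p ∈ s, (1 - (p : ℝ) ^ (-σ))⁻¹ ≤
      exp (2 * (p : ℝ) ^ (-(2 * σ))) * (1 + (p : ℝ) ^ (-σ)) := by
    intro p hp
    have hp1 : (1 : ℝ) ≤ p := mod_cast (hs p hp).one_lt.le
    have hsq : ((p : ℝ) ^ (-σ)) ^ 2 = (p : ℝ) ^ (-(2 * σ)) := by
      rw [← rpow_natCast, ← rpow_mul p.cast_nonneg]; ring_nf
    rw [← hsq]
    refine inv_one_sub_le_exp_sq_mul_one_add (rpow_nonneg p.cast_nonneg _) ?_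
    calc ((p : ℝ) ^ (-σ)) ^ 2 = (p : ℝ) ^ (-(2 * σ)) := hsq
      _ ≤ (p : ℝ) ^ (-1 : ℝ) := rpow_le_rpow_of_exponent_le hp1 (by linarith)
      _ ≤ 1 / 2 := by
        rw [rpow_neg_one, one_div]; exact inv_anti₀ two_pos (mod_cast (hs p hp).two_le)
  have hsum : ∑ p ∈ s, (p : ℝ) ^ (-(2 * σ)) ≤ ∑' k : ℕ, (k : ℝ) ^ (-(2 * σ)) :=
    Summable.sum_le_tsum s (fun k _ ↦ rpow_nonneg k.cast_nonneg _)
      (summable_nat_rpow.2 (by linarith))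
  calc ∏ p ∈ s, (1 - (p : ℝ) ^ (-σ))⁻¹
      ≤ ∏ p ∈ s, exp (2 * (p : ℝ) ^ (-(2 * σ))) * (1 + (p : ℝ) ^ (-σ)) :=
        prod_le_prod (fun p hp ↦ inv_nonneg.2 (sub_nonneg.2 (rpow_le_one_of_one_le_of_nonpos
          (mod_cast (hs p hp).one_lt.le) (by linarith)))) hfactor
    _ = exp (2 * ∑ p ∈ s, (p : ℝ) ^ (-(2 * σ))) * ∏ p ∈ s, (1 + (p : ℝ) ^ (-σ)) := by
        rw [prod_mul_distrib, ← exp_sum, mul_sum]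
    _ ≤ _ := by gcongr

theorem prod_one_add_rpow_neg_le_bFactor (α : ℝ) {s : Finset ℕ} {m : ℕ}
    (hs : s ⊆ m.primeFactors) : ∏ p ∈ s, (1 + (p : ℝ) ^ (-α)) ≤ bFactor α m :=
  prod_le_prod_of_subset_of_one_le hs
    (fun p _ ↦ add_nonneg zero_le_one (rpow_nonneg p.cast_nonneg _))
    (fun p _ _ ↦ le_add_of_nonneg_right (rpow_nonneg p.cast_nonneg _))

/-- Rankin-type estimate: uniformly for `m, n ≥ 1` and real `y ≥ 1`,
`∑_{δ ≤ y, δ ∣ m^∞, (δ,n)=1} 1/δ = ∏_{p ∣ m, p ∤ n} (1-1/p)⁻¹ + O(b_{3/4}(m)/y^{1/4})`. -/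
theorem stmt_0 :
    ∃ C : ℝ, 0 < C ∧ ∀ (m n : ℕ) (y : ℝ), 1 ≤ m → 1 ≤ n → 1 ≤ y →
      |(∑ δ ∈ (Finset.Icc 1 ⌊y⌋₊).filter
            (fun δ => δ.primeFactors ⊆ m.primeFactors ∧ Nat.Coprime δ n),
          (1 : ℝ) / δ)
        - ∏ p ∈ m.primeFactors.filter (fun p => ¬ p ∣ n), (1 - (p : ℝ)⁻¹)⁻¹|
      ≤ C * bFactor (3/4) m / y ^ ((1 : ℝ)/4) := by
  set C := exp (2 * ∑' k : ℕ, (k : ℝ) ^ (-(2 * (3 / 4 : ℝ))))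
  refine ⟨C, exp_pos _, fun m n y _ _ hy ↦ ?_⟩
  set s := {p ∈ m.primeFactors | ¬ p ∣ n}
  have hs : ∀ p ∈ s, p.Prime := fun p hp ↦ Nat.prime_of_mem_primeFactors (mem_filter.1 hp).1
  set g := (Nat.factoredNumbers s).indicator fun k : ℕ ↦ (k : ℝ) ^ (-1 : ℝ)
  have hsum : ∑ δ ∈ Icc 1 ⌊y⌋₊ with δ.primeFactors ⊆ m.primeFactors ∧ δ.Coprime n, (1 : ℝ) / δ
      = ∑ δ ∈ Icc 1 ⌊y⌋₊, g δ := by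
    rw [sum_filter]
    refine sum_congr rfl fun δ hδ ↦ ?_
    simp only [g, s, Set.indicator_apply, mem_factoredNumbers_filter_not_dvd_iff (by grind : δ ≠ 0),
      rpow_neg_one, one_div]
  have hprod : ∏ p ∈ s, (1 - (p : ℝ)⁻¹)⁻¹ = ∏ p ∈ s, (1 - (p : ℝ) ^ (-1 : ℝ))⁻¹ := by
    simp only [rpow_neg_one]
  calc _ = |∑ δ ∈ Icc 1 ⌊y⌋₊, g δ - ∏ p ∈ s, (1 - (p : ℝ) ^ (-1 : ℝ))⁻¹| := by rw [hsum, hprod]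
    _ ≤ y ^ (3 / 4 - 1 : ℝ) * ∏ p ∈ s, (1 - (p : ℝ) ^ (-(3 / 4 : ℝ)))⁻¹ :=
        abs_sum_Icc_floor_sub_le (by norm_num) (by norm_num) (by linarith)
          (hasSum_indicator_factoredNumbers_rpow_neg one_pos hs)
          (hasSum_indicator_factoredNumbers_rpow_neg (by norm_num) hs)
    _ ≤ y ^ (3 / 4 - 1 : ℝ) * (C * bFactor (3 / 4) m) := by
        gcongr
        exact (prod_inv_one_sub_rpow_neg_le (by norm_num) hs).trans
          (by gcongr; exact prod_one_add_rpow_neg_le_bFactor _ (filter_subset _ _))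
    _ = C * bFactor (3 / 4) m / y ^ ((1 : ℝ) / 4) := by
        rw [show (3 / 4 - 1 : ℝ) = -(1 / 4) by norm_num, rpow_neg (by linarith)]
        ring
end

section
/- Uniformly for 2 ≤ y ≤ z ≤ x, the number of integers n ≤ x whose y-smooth part exceeds z satisfies #{n ≤ x : ∏_{p^ν ∥ n, p ≤ y} p^ν > z} ≪ x · exp(−(log z)/(2 log y)). -/
open Finset Real

/-- The `y`-smooth part of `n`: the product of the prime powers `p^ν ∥ n` with `p ≤ y`. -/
noncomputable def smoothPart (y : ℝ) (n : ℕ) : ℕ :=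
  ∏ p ∈ n.primeFactors.filter (fun p => ((p : ℕ) : ℝ) ≤ y), p ^ (n.factorization p)

/-!
Rankin's trick: with `α = 1 / (2 log y)` and `S` the `y`-smooth part, the count is at most
`z^{-α} ∑_{n ≤ x} S(n)^α`. Write `S^α = 1 ∗ g` with `g = S^α ∗ μ`; then `g` is multiplicative,
nonnegative, vanishes at `p^k` for `p > y`, and `g(p^{k+1}) = (p^α - 1) p^{kα}` for `p ≤ y`. Hence
`∑_{n ≤ x} S(n)^α ≤ x ∑_d g(d)/d ≤ x ∏_{p ≤ y} (1 + (p^α - 1)/(p - p^α))`. As `p^α ≤ e^{1/2}`,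
each factor is `exp(O(α log p / p))`, and Chebyshev's bound gives
`∑_{p ≤ y} log p / p ≤ log y + O(1)`, so the product is bounded.
-/

open ArithmeticFunction hiding log
open scoped ArithmeticFunction.Moebius ArithmeticFunction.zeta

lemma smoothPart_eq_factorization_prod (y : ℝ) (n : ℕ) :
    smoothPart y n = n.factorization.prod fun p k => if (p : ℝ) ≤ y then p ^ k else 1 := by
  rw [smoothPart, prod_filter, Finsupp.prod, Nat.support_factorization]

lemma smoothPart_mul {y : ℝ} {m n : ℕ} (hm : m ≠ 0) (hn : n ≠ 0) :
    smoothPart y (m * n) = smoothPart y m * smoothPart y n := by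
  simp only [smoothPart_eq_factorization_prod, Nat.factorization_mul hm hn]
  refine Finsupp.prod_add_index' (fun _ => by simp) fun p a b => ?_
  split_ifs <;> simp [pow_add]

lemma smoothPart_prime_pow {y : ℝ} {p : ℕ} (hp : p.Prime) (k : ℕ) :
    smoothPart y (p ^ k) = if (p : ℝ) ≤ y then p ^ k else 1 := by
  rw [smoothPart_eq_factorization_prod, hp.factorization_pow, Finsupp.prod_single_index (by simp)]

-- `smoothPart y 0 = 1`, so the value at `0` is set by hand.
noncomputable def smoothPartRpow (y α : ℝ) : ArithmeticFunction ℝ :=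
  ⟨fun n => if n = 0 then 0 else (smoothPart y n : ℝ) ^ α, if_pos rfl⟩

section SmoothPartRpow

variable {y α : ℝ}

lemma smoothPartRpow_apply {n : ℕ} (hn : n ≠ 0) :
    smoothPartRpow y α n = (smoothPart y n : ℝ) ^ α :=
  if_neg hn

lemma isMultiplicative_smoothPartRpow : (smoothPartRpow y α).IsMultiplicative := by
  refine IsMultiplicative.iff_ne_zero.mpr ⟨by simp [smoothPartRpow_apply, smoothPart], ?_⟩
  intro m n hm hn _
  rw [smoothPartRpow_apply (mul_ne_zero hm hn), smoothPartRpow_apply hm, smoothPartRpow_apply hn,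
    smoothPart_mul hm hn, Nat.cast_mul, mul_rpow (Nat.cast_nonneg _) (Nat.cast_nonneg _)]

lemma smoothPartRpow_prime_pow {p : ℕ} (hp : p.Prime) (k : ℕ) :
    smoothPartRpow y α (p ^ k) = if (p : ℝ) ≤ y then ((p : ℝ) ^ α) ^ k else 1 := by
  rw [smoothPartRpow_apply (pow_ne_zero _ hp.ne_zero), smoothPart_prime_pow hp]
  split_ifs
  · rw [Nat.cast_pow, ← rpow_natCast, ← rpow_mul (Nat.cast_nonneg _), mul_comm,
      rpow_mul (Nat.cast_nonneg _), rpow_natCast]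
  · simp

end SmoothPartRpow

noncomputable def smoothPartRpowMoebius (y α : ℝ) : ArithmeticFunction ℝ :=
  smoothPartRpow y α * μ

section SmoothPartRpowMoebius

variable {y α : ℝ}

lemma isMultiplicative_smoothPartRpowMoebius : (smoothPartRpowMoebius y α).IsMultiplicative :=
  isMultiplicative_smoothPartRpow.mul isMultiplicative_moebius.intCast

lemma coe_zeta_mul_smoothPartRpowMoebius : ζ * smoothPartRpowMoebius y α = smoothPartRpow y α := by
  rw [smoothPartRpowMoebius, mul_comm, mul_assoc, coe_moebius_mul_coe_zeta, mul_one]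

lemma smoothPartRpowMoebius_prime_pow_succ {p : ℕ} (hp : p.Prime) (k : ℕ) :
    smoothPartRpowMoebius y α (p ^ (k + 1)) =
      if (p : ℝ) ≤ y then ((p : ℝ) ^ α - 1) * ((p : ℝ) ^ α) ^ k else 0 := by
  have h (j : ℕ) : ∑ i ∈ range (j + 1), smoothPartRpowMoebius y α (p ^ i) =
      smoothPartRpow y α (p ^ j) := by
    rw [← coe_zeta_mul_smoothPartRpowMoebius, coe_zeta_mul_apply, Nat.sum_divisors_prime_pow hp]
  have hsucc := h (k + 1)
  rw [sum_range_succ, h k, smoothPartRpow_prime_pow hp, smoothPartRpow_prime_pow hp] at hsucc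
  split_ifs at hsucc ⊢ <;> linear_combination hsucc

lemma smoothPartRpowMoebius_nonneg (hα : 0 ≤ α) (n : ℕ) : 0 ≤ smoothPartRpowMoebius y α n := by
  rcases eq_or_ne n 0 with rfl | hn
  · simp
  rw [isMultiplicative_smoothPartRpowMoebius.multiplicative_factorization _ hn]
  refine prod_nonneg fun p hpn => ?_
  have hp : p.Prime := Nat.prime_of_mem_primeFactors (by simpa using hpn)
  dsimp only
  obtain _ | k := n.factorization p
  · simp [isMultiplicative_smoothPartRpowMoebius.map_one]
  rw [smoothPartRpowMoebius_prime_pow_succ hp]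
  have : 1 ≤ (p : ℝ) ^ α := one_le_rpow (by exact_mod_cast hp.one_le) hα
  split_ifs
  · exact mul_nonneg (by linarith) (by positivity)
  · rfl

end SmoothPartRpowMoebius

lemma sum_Ioc_le_prod_tsum_prime_pow {f : ℕ → ℝ} (hf₀ : ∀ n, 0 ≤ f n) (hf₁ : f 1 = 1)
    (hmul : ∀ {m n : ℕ}, m.Coprime n → f (m * n) = f m * f n)
    (hsum : ∀ {p : ℕ}, p.Prime → Summable fun k => f (p ^ k)) (N : ℕ) :
    ∑ n ∈ Ioc 0 N, f n ≤ ∏ p ∈ Nat.primesLE N, ∑' k, f (p ^ k) := by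
  have hmem : ∀ n ∈ Ioc 0 N, n ∈ Nat.factoredNumbers (range (N + 1)) := fun n hn => by
    rw [mem_Ioc] at hn
    exact Nat.mem_factoredNumbers_iff_forall_le.mpr
      ⟨hn.1.ne', fun p hp _ _ => mem_range.mpr (by omega)⟩
  have hprod := (EulerProduct.summable_and_hasSum_factoredNumbers_prod_filter_prime_tsum hf₁ hmul
    (fun hp => by simpa only [norm_of_nonneg (hf₀ _)] using hsum hp) (range (N + 1))).2
  rw [← sum_subtype_of_mem f hmem]
  exact sum_le_hasSum _ (fun m _ => hf₀ m) hprod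

lemma exp_sub_one_le_of_le_half {t : ℝ} (ht₀ : 0 ≤ t) (ht : t ≤ 1 / 2) :
    exp t - 1 ≤ 3 / 2 * t := by
  have := (abs_le.mp (abs_exp_sub_one_sub_id_le (x := t) (by rw [abs_of_nonneg ht₀]; linarith))).2
  nlinarith

lemma one_add_exp_sub_one_div_le_exp {P t : ℝ} (hP : 2 ≤ P) (ht₀ : 0 ≤ t) (ht : t ≤ 1 / 2) :
    1 + (exp t - 1) / (P - exp t) ≤ exp (12 * t / P) := by
  have hsub := exp_sub_one_le_of_le_half ht₀ ht
  have hPt : 0 < P - exp t := by linarith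
  have : (exp t - 1) / (P - exp t) ≤ 12 * t / P := by
    rw [div_le_div_iff₀ hPt (by linarith)]
    nlinarith
  linarith [add_one_le_exp (12 * t / P)]

section LocalFactor

variable {y α : ℝ} {p : ℕ}

lemma hasSum_smoothPartRpowMoebius_prime_pow_div_of_le (hp : p.Prime) (hpy : (p : ℝ) ≤ y)
    (hpα : (p : ℝ) ^ α < p) :
    HasSum (fun k => smoothPartRpowMoebius y α (p ^ k) / (p ^ k : ℕ))
      (1 + ((p : ℝ) ^ α - 1) / (p - (p : ℝ) ^ α)) := by
  set a := (p : ℝ) ^ α with ha_def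
  have hp₀ : (0 : ℝ) < p := by exact_mod_cast hp.pos
  have ha : 0 ≤ a := by positivity
  have hgeom := (hasSum_geometric_of_lt_one (r := a / p) (by positivity)
    ((div_lt_one hp₀).mpr hpα)).mul_left ((a - 1) / p)
  have hterm (k : ℕ) : smoothPartRpowMoebius y α (p ^ (k + 1)) / (p ^ (k + 1) : ℕ) =
      (a - 1) / p * (a / p) ^ k := by
    rw [smoothPartRpowMoebius_prime_pow_succ hp, if_pos hpy, ← ha_def, div_pow]
    push_cast
    field_simp
    ring
  have hvalue : (a - 1) / p * (1 - a / p)⁻¹ = (a - 1) / (p - a) := by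
    field_simp [(sub_pos.mpr hpα).ne']
  have htail : HasSum (fun k => smoothPartRpowMoebius y α (p ^ (k + 1)) / (p ^ (k + 1) : ℕ))
      ((a - 1) / (p - a)) := by
    simpa only [hterm, hvalue] using hgeom
  have h₀ : smoothPartRpowMoebius y α (p ^ 0) / (p ^ 0 : ℕ) = 1 := by
    simp [isMultiplicative_smoothPartRpowMoebius.map_one]
  have h := HasSum.zero_add (f := fun k => smoothPartRpowMoebius y α (p ^ k) / (p ^ k : ℕ)) htail
  rwa [h₀] at h

lemma hasSum_smoothPartRpowMoebius_prime_pow_div_of_lt (hp : p.Prime) (hpy : y < p) :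
    HasSum (fun k => smoothPartRpowMoebius y α (p ^ k) / (p ^ k : ℕ)) 1 := by
  convert hasSum_single 0 fun k hk => ?_
  · simp [isMultiplicative_smoothPartRpowMoebius.map_one]
  obtain ⟨k, rfl⟩ := Nat.exists_eq_succ_of_ne_zero hk
  rw [smoothPartRpowMoebius_prime_pow_succ hp, if_neg hpy.not_ge, zero_div]

lemma summable_smoothPartRpowMoebius_prime_pow_div_and_tsum_le (hp : p.Prime) (hα : 0 ≤ α)
    (hαy : α * log y ≤ 1 / 2) :
    (Summable fun k => smoothPartRpowMoebius y α (p ^ k) / (p ^ k : ℕ)) ∧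
      ∑' k, smoothPartRpowMoebius y α (p ^ k) / (p ^ k : ℕ) ≤
        exp (if (p : ℝ) ≤ y then 12 * (α * log p) / p else 0) := by
  rcases le_or_gt (p : ℝ) y with hpy | hpy
  · have hp₀ : (0 : ℝ) < p := by exact_mod_cast hp.pos
    have ht₀ : 0 ≤ α * log p := mul_nonneg hα (log_nonneg (by exact_mod_cast hp.one_le))
    have ht : α * log p ≤ 1 / 2 := (mul_le_mul_of_nonneg_left (log_le_log hp₀ hpy) hα).trans hαy
    have hexp : (p : ℝ) ^ α = exp (α * log p) := by rw [rpow_def_of_pos hp₀, mul_comm]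
    have hP : (2 : ℝ) ≤ p := by exact_mod_cast hp.two_le
    have hpα : (p : ℝ) ^ α < p := by linarith [exp_sub_one_le_of_le_half ht₀ ht]
    have h := hasSum_smoothPartRpowMoebius_prime_pow_div_of_le hp hpy hpα
    rw [hexp] at h
    exact ⟨h.summable, h.tsum_eq ▸ if_pos hpy ▸ one_add_exp_sub_one_div_le_exp hP ht₀ ht⟩
  · have h := hasSum_smoothPartRpowMoebius_prime_pow_div_of_lt (α := α) hp hpy
    exact ⟨h.summable, by rw [h.tsum_eq, if_neg hpy.not_ge, exp_zero]⟩

end LocalFactor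

lemma sum_Ioc_vonMangoldt_div_le (n : ℕ) : ∑ d ∈ Ioc 0 n, Λ d / d ≤ log n + (log 4 + 4) := by
  rcases Nat.eq_zero_or_pos n with rfl | hn
  · simp only [Ioc_self, sum_empty, Nat.cast_zero, log_zero, zero_add]
    positivity
  have hn' : (0 : ℝ) < n := by exact_mod_cast hn
  -- `∑_{d ≤ n} Λ(d) ⌊n/d⌋ = log n! ≤ n log n`
  have hlog : ∑ d ∈ Ioc 0 n, Λ d * (n / d : ℕ) ≤ n * log n := by
    rw [← sum_Ioc_mul_zeta_eq_sum, vonMangoldt_mul_zeta]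
    calc ∑ m ∈ Ioc 0 n, ArithmeticFunction.log m ≤ ∑ _m ∈ Ioc 0 n, log n :=
          sum_le_sum fun m hm => by
            rw [mem_Ioc] at hm
            exact log_le_log (by exact_mod_cast hm.1) (by exact_mod_cast hm.2)
      _ = n * log n := by simp
  have hpsi : ∑ d ∈ Ioc 0 n, Λ d ≤ (log 4 + 4) * n := by
    simpa [Chebyshev.psi] using Chebyshev.psi_le_const_mul_self (Nat.cast_nonneg (α := ℝ) n)
  refine le_of_mul_le_mul_left ?_ hn'
  calc n * ∑ d ∈ Ioc 0 n, Λ d / d = ∑ d ∈ Ioc 0 n, Λ d * (n / d) := by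
        rw [mul_sum]
        exact sum_congr rfl fun d _ => by ring
    _ ≤ ∑ d ∈ Ioc 0 n, Λ d * ((n / d : ℕ) + 1) := by
        gcongr with d
        rw [← Nat.floor_div_eq_div (K := ℝ)]
        exact (Nat.lt_floor_add_one _).le
    _ = ∑ d ∈ Ioc 0 n, Λ d * (n / d : ℕ) + ∑ d ∈ Ioc 0 n, Λ d := by
        rw [← sum_add_distrib]
        exact sum_congr rfl fun d _ => by ring
    _ ≤ n * (log n + (log 4 + 4)) := by linarith

lemma sum_primesLE_log_div_le (n : ℕ) :
    ∑ p ∈ Nat.primesLE n, log p / p ≤ log n + (log 4 + 4) :=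
  calc ∑ p ∈ Nat.primesLE n, log p / p = ∑ p ∈ Nat.primesLE n, Λ p / p :=
        sum_congr rfl fun p hp => by rw [vonMangoldt_apply_prime (Nat.mem_primesLE.mp hp).2]
    _ ≤ ∑ d ∈ Ioc 0 n, Λ d / d := by
        refine sum_le_sum_of_subset_of_nonneg (fun p hp => ?_) fun d _ _ => ?_
        · obtain ⟨hpn, hp⟩ := Nat.mem_primesLE.mp hp
          exact mem_Ioc.mpr ⟨hp.pos, hpn⟩
        · exact div_nonneg vonMangoldt_nonneg (Nat.cast_nonneg d)
    _ ≤ log n + (log 4 + 4) := sum_Ioc_vonMangoldt_div_le n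

lemma sum_Ioc_smoothPartRpow_le {y α : ℝ} (hα : 0 ≤ α) (hαy : α * log y ≤ 1 / 2) (N : ℕ) :
    ∑ n ∈ Ioc 0 N, smoothPartRpow y α n ≤
      N * exp (12 * α * ∑ p ∈ Nat.primesLE ⌊y⌋₊, log p / p) := by
  have hg := isMultiplicative_smoothPartRpowMoebius (y := y) (α := α)
  have hg₀ := smoothPartRpowMoebius_nonneg (y := y) hα
  have hlocal {p : ℕ} (hp : p.Prime) :=
    summable_smoothPartRpowMoebius_prime_pow_div_and_tsum_le (y := y) hp hα hαy
  have heuler : ∑ d ∈ Ioc 0 N, smoothPartRpowMoebius y α d / d ≤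
      ∏ p ∈ Nat.primesLE N, ∑' k, smoothPartRpowMoebius y α (p ^ k) / (p ^ k : ℕ) :=
    sum_Ioc_le_prod_tsum_prime_pow (fun d => div_nonneg (hg₀ d) (Nat.cast_nonneg d))
      (by simp [hg.map_one])
      (fun hmn => by rw [hg.map_mul_of_coprime hmn, Nat.cast_mul, mul_div_mul_comm])
      (fun hp => (hlocal hp).1) N
  have hexponent : ∑ p ∈ Nat.primesLE N, (if (p : ℝ) ≤ y then 12 * (α * log p) / p else 0) ≤
      12 * α * ∑ p ∈ Nat.primesLE ⌊y⌋₊, log p / p := by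
    rw [← sum_filter, mul_sum]
    calc _ = ∑ p ∈ (Nat.primesLE N).filter (fun p : ℕ => (p : ℝ) ≤ y), 12 * α * (log p / p) :=
          sum_congr rfl fun p _ => by ring
      _ ≤ _ := by
          refine sum_le_sum_of_subset_of_nonneg (fun p hp => ?_) fun p hp _ => ?_
          · rw [mem_filter, Nat.mem_primesLE] at hp
            exact Nat.mem_primesLE.mpr ⟨Nat.le_floor hp.2, hp.1.2⟩
          · have := (Nat.mem_primesLE.mp hp).2.one_le
            positivity
  calc ∑ n ∈ Ioc 0 N, smoothPartRpow y α n
        = ∑ d ∈ Ioc 0 N, smoothPartRpowMoebius y α d * (N / d : ℕ) := by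
        rw [← coe_zeta_mul_smoothPartRpowMoebius, mul_comm, sum_Ioc_mul_zeta_eq_sum]
    _ ≤ ∑ d ∈ Ioc 0 N, smoothPartRpowMoebius y α d * (N / d) := by
        gcongr with d
        · exact hg₀ d
        · exact Nat.cast_div_le
    _ = N * ∑ d ∈ Ioc 0 N, smoothPartRpowMoebius y α d / d := by
        rw [mul_sum]
        exact sum_congr rfl fun d _ => by ring
    _ ≤ N * ∏ p ∈ Nat.primesLE N, exp (if (p : ℝ) ≤ y then 12 * (α * log p) / p else 0) := by
        gcongr
        refine heuler.trans (prod_le_prod (fun p _ => tsum_nonneg fun k => ?_)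
          fun p hp => (hlocal (Nat.mem_primesLE.mp hp).2).2)
        exact div_nonneg (hg₀ _) (Nat.cast_nonneg _)
    _ ≤ N * exp (12 * α * ∑ p ∈ Nat.primesLE ⌊y⌋₊, log p / p) := by
        rw [← exp_sum]
        gcongr

lemma card_filter_lt_le_sum_rpow_div {ι : Type*} (s : Finset ι) {h : ι → ℝ} (hh : ∀ i, 0 ≤ h i)
    {z α : ℝ} (hz : 0 < z) (hα : 0 ≤ α) :
    (#{i ∈ s | z < h i} : ℝ) ≤ (∑ i ∈ s, h i ^ α) / z ^ α := by
  rw [le_div_iff₀ (rpow_pos_of_pos hz α)]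
  calc (#{i ∈ s | z < h i} : ℝ) * z ^ α = ∑ i ∈ s with z < h i, z ^ α := by simp
    _ ≤ ∑ i ∈ s with z < h i, h i ^ α :=
        sum_le_sum fun i hi => rpow_le_rpow hz.le (mem_filter.mp hi).2.le hα
    _ ≤ ∑ i ∈ s, h i ^ α :=
        sum_le_sum_of_subset_of_nonneg (filter_subset _ _) fun i _ _ => rpow_nonneg (hh i) α

lemma twelve_mul_sum_primesLE_log_div_le {y : ℝ} (hy : 2 ≤ y) :
    12 * (2 * log y)⁻¹ * ∑ p ∈ Nat.primesLE ⌊y⌋₊, log p / p ≤ 54 := by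
  have hlogy : 0 < log y := log_pos (by linarith)
  have hfloor : log ⌊y⌋₊ ≤ log y :=
    log_le_log (by exact_mod_cast Nat.floor_pos.mpr (by linarith)) (Nat.floor_le (by linarith))
  have hlog4 : log 4 + 4 ≤ 8 * log y := by
    have : log 4 = 2 * log 2 := by
      rw [show (4 : ℝ) = 2 ^ 2 by norm_num, log_pow, Nat.cast_ofNat]
    linarith [log_two_gt_d9, log_le_log two_pos hy]
  calc 12 * (2 * log y)⁻¹ * ∑ p ∈ Nat.primesLE ⌊y⌋₊, log p / p
      ≤ 12 * (2 * log y)⁻¹ * (9 * log y) := by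
        gcongr
        linarith [sum_primesLE_log_div_le ⌊y⌋₊]
    _ = 54 := by field_simp; norm_num

/-- Uniformly for `2 ≤ y ≤ z ≤ x`, the number of `n ≤ x` whose `y`-smooth part exceeds `z`
is `≪ x · exp(−(log z)/(2 log y))`, with an absolute implied constant. -/
theorem stmt_1 :
    ∃ C : ℝ, 0 < C ∧ ∀ x y z : ℝ, 2 ≤ y → y ≤ z → z ≤ x →
      (((Finset.Icc 1 ⌊x⌋₊).filter
          (fun n => z < (smoothPart y n : ℝ))).card : ℝ)
        ≤ C * x * Real.exp (-(Real.log z) / (2 * Real.log y)) := by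
  refine ⟨exp 54, exp_pos 54, fun x y z hy hyz hzx => ?_⟩
  have hlogy : 0 < log y := log_pos (by linarith)
  have hz : 0 < z := by linarith
  have hα : 0 ≤ (2 * log y)⁻¹ := by positivity
  have hαy : (2 * log y)⁻¹ * log y ≤ 1 / 2 := (by field_simp : (2 * log y)⁻¹ * log y = 1 / 2).le
  have hzα : exp (-log z / (2 * log y)) = (z ^ (2 * log y)⁻¹)⁻¹ := by
    rw [rpow_def_of_pos hz, ← exp_neg, neg_div, div_eq_mul_inv]
  rw [show Icc 1 ⌊x⌋₊ = Ioc 0 ⌊x⌋₊ from Icc_add_one_left_eq_Ioc 0 _, hzα]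
  calc (#{n ∈ Ioc 0 ⌊x⌋₊ | z < (smoothPart y n : ℝ)} : ℝ)
      ≤ (∑ n ∈ Ioc 0 ⌊x⌋₊, (smoothPart y n : ℝ) ^ (2 * log y)⁻¹) / z ^ (2 * log y)⁻¹ :=
        card_filter_lt_le_sum_rpow_div _ (fun n => Nat.cast_nonneg _) hz hα
    _ = (∑ n ∈ Ioc 0 ⌊x⌋₊, smoothPartRpow y (2 * log y)⁻¹ n) / z ^ (2 * log y)⁻¹ := by
        congr 1
        exact sum_congr rfl fun n hn => (smoothPartRpow_apply (mem_Ioc.mp hn).1.ne').symm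
    _ ≤ (x * exp 54) / z ^ (2 * log y)⁻¹ := by
        gcongr
        exact (sum_Ioc_smoothPartRpow_le hα hαy _).trans (mul_le_mul (Nat.floor_le (by linarith))
          (exp_le_exp.mpr (twelve_mul_sum_primesLE_log_div_le hy)) (exp_pos _).le (by linarith))
    _ = exp 54 * x * (z ^ (2 * log y)⁻¹)⁻¹ := by ring
end

section
/- Let f be a real additive arithmetic function such that the three series ∑_{|f(p)|>1} 1/p, ∑_{|f(p)|≤1} f(p)²/p, and ∑_{|f(p)|≤1} f(p)/p all converge. Then for each real r ≥ 0, the infinite product φ_{F_r}(θ) := ∏_p ( 1 + (1−1/p) ∑_{ν ≥ 1} (e^{iθ f(p^ν)} − 1)/(p^{ν−1}(p−1+r)) ) converges for every real θ and defines the characteristic function of a probability distribution F_r on ℝ. -/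
/-!
Take independent exponents `ν_p` with `P(ν_p = ν) = primePowerWeight r p ν` and put
`X_p = f(p^ν_p)` (`X_p = 0` when `ν_p = 0`); the local factor at `p` is the characteristic
function of `X_p`. Since `P(ν_p ≥ 2) = O(1/p²)` and `P(ν_p = 1) ≤ 1/p`, we get
`E min(|X_p|, 1) ≤ min(|f p|, 1)/p + 2/p²`, which is summable by the first and third series
(an unconditionally summable real series converges absolutely). Hence `∑_p X_p` converges
absolutely almost surely, and by dominated convergence the characteristic function of its law
is the limit of the finite products of local factors.
-/

open Finset Real MeasureTheory Complex

/-- The local factor at the prime `p` of the Erdős–Wintner type product: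
`1 + (1−1/p) ∑_{ν ≥ 1} (e^{iθ f(p^ν)} − 1)/(p^{ν−1}(p−1+r))`. -/
noncomputable def localFactor (f : ℕ → ℝ) (r θ : ℝ) (p : Nat.Primes) : ℂ :=
  1 + (1 - 1 / ((p : ℕ) : ℂ)) *
    ∑' ν : ℕ, (Complex.exp (θ * f ((p : ℕ) ^ (ν + 1)) * Complex.I) - 1) /
      (((p : ℕ) : ℂ) ^ ν * (((p : ℕ) : ℂ) - 1 + (r : ℂ)))

open ProbabilityTheory Filter Topology
open scoped ENNReal

theorem ae_summable_of_tsum_lintegral_min_abs_one_ne_top {Ω ι : Type*} [MeasurableSpace Ω]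
    [Countable ι] {P : Measure Ω} {X : ι → Ω → ℝ} (hX : ∀ i, AEMeasurable (X i) P)
    (h : ∑' i, ∫⁻ ω, ENNReal.ofReal (min |X i ω| 1) ∂P ≠ ∞) :
    ∀ᵐ ω ∂P, Summable fun i => X i ω := by
  have hmeas : ∀ i, AEMeasurable (fun ω => ENNReal.ofReal (min |X i ω| 1)) P := fun i =>
    ENNReal.measurable_ofReal.comp_aemeasurable ((hX i).abs.min aemeasurable_const)
  have hfin : ∀ᵐ ω ∂P, ∑' i, ENNReal.ofReal (min |X i ω| 1) < ∞ :=
    ae_lt_top' (AEMeasurable.tsum hmeas) (by rwa [lintegral_tsum hmeas])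
  filter_upwards [hfin] with ω hω
  have hsum : Summable fun i => min |X i ω| 1 :=
    (ENNReal.summable_toReal hω.ne).congr fun i => ENNReal.toReal_ofReal (by positivity)
  refine hsum.of_norm_bounded_eventually ?_
  filter_upwards [hsum.tendsto_cofinite_zero.eventually (gt_mem_nhds one_pos)] with i hi
  rw [Real.norm_eq_abs, min_eq_left ((min_lt_iff.1 hi).resolve_right (lt_irrefl 1)).le]

section InfiniteProduct

variable {ι : Type*} (μ : ι → Measure ℝ) [∀ i, IsProbabilityMeasure (μ i)]

theorem ae_summable_infinitePi [Countable ι]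
    (h : ∑' i, ∫⁻ x, ENNReal.ofReal (min |x| 1) ∂μ i ≠ ∞) :
    ∀ᵐ ω ∂Measure.infinitePi μ, Summable ω := by
  refine ae_summable_of_tsum_lintegral_min_abs_one_ne_top
    (X := fun (i : ι) (ω : ι → ℝ) => ω i) (fun i => (measurable_pi_apply i).aemeasurable) ?_
  refine ne_of_eq_of_ne (tsum_congr fun i => ?_) h
  exact (measurePreserving_eval_infinitePi μ i).lintegral_comp
    (f := fun x => ENNReal.ofReal (min |x| 1)) (by fun_prop)

theorem charFun_map_finsetSum_infinitePi (s : Finset ι) (θ : ℝ) :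
    charFun ((Measure.infinitePi μ).map fun ω => ∑ i ∈ s, ω i) θ = ∏ i ∈ s, charFun (μ i) θ := by
  have hrestrict : (fun ω : ι → ℝ => ∑ i ∈ s, ω i) = (fun x : s → ℝ => ∑ i, x i) ∘ s.restrict := by
    ext ω; exact (Finset.sum_coe_sort s ω).symm
  rw [hrestrict, ← Measure.map_map (by fun_prop) (by fun_prop), Measure.infinitePi_map_restrict,
    charFun_map_sum_pi_eq_prod, Finset.prod_apply,
    Finset.prod_coe_sort s (fun i => charFun (μ i) θ)]

theorem hasProd_charFun_map_tsum_infinitePi [Countable ι]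
    (h : ∀ᵐ ω ∂Measure.infinitePi μ, Summable ω) (θ : ℝ) :
    HasProd (fun i => charFun (μ i) θ)
      (charFun ((Measure.infinitePi μ).map fun ω => ∑' i, ω i) θ) := by
  have hconv : ∀ᵐ ω ∂Measure.infinitePi μ,
      Tendsto (fun s : Finset ι => ∑ i ∈ s, ω i) atTop (𝓝 (∑' i, ω i)) :=
    h.mono fun ω hω => hω.hasSum
  have hS : AEMeasurable (fun ω : ι → ℝ => ∑' i, ω i) (Measure.infinitePi μ) :=
    (Measurable.tsum measurable_pi_apply).aemeasurable
  have hcont : Continuous fun x : ℝ => Complex.exp (θ * x * Complex.I) := by fun_prop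
  have hfinite : ∀ s : Finset ι, ∏ i ∈ s, charFun (μ i) θ =
      ∫ ω, Complex.exp (θ * (∑ i ∈ s, ω i : ℝ) * Complex.I) ∂Measure.infinitePi μ := fun s => by
    rw [← charFun_map_finsetSum_infinitePi, charFun_apply_real,
      integral_map (by fun_prop) hcont.aestronglyMeasurable]
  rw [charFun_apply_real, integral_map hS hcont.aestronglyMeasurable]
  change Tendsto (fun s => ∏ i ∈ s, charFun (μ i) θ) atTop _
  simp_rw [hfinite]
  refine tendsto_integral_filter_of_dominated_convergence (fun _ => 1)
    (Eventually.of_forall fun s => (hcont.comp_aestronglyMeasurable (by fun_prop)))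
    (Eventually.of_forall fun s => Eventually.of_forall fun ω => ?_) (integrable_const 1)
    (hconv.mono fun ω hω => (hcont.tendsto _).comp hω)
  rw [← Complex.ofReal_mul, Complex.norm_exp_ofReal_mul_I]

end InfiniteProduct

section DiscreteLaw

variable {α : Type*} {w : α → ℝ} (V : α → ℝ)

variable (w) in
noncomputable def discreteLaw : Measure ℝ :=
  Measure.sum fun a => ENNReal.ofReal (w a) • Measure.dirac (V a)

theorem isProbabilityMeasure_discreteLaw (hw : HasSum w 1) (hw0 : ∀ a, 0 ≤ w a) :
    IsProbabilityMeasure (discreteLaw w V) := by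
  constructor
  simp [discreteLaw, Measure.sum_apply _ MeasurableSet.univ,
    ← ENNReal.ofReal_tsum_of_nonneg hw0 hw.summable, hw.tsum_eq]

theorem lintegral_discreteLaw (g : ℝ → ℝ≥0∞) :
    ∫⁻ x, g x ∂discreteLaw w V = ∑' a, ENNReal.ofReal (w a) * g (V a) := by
  simp [discreteLaw, lintegral_sum_measure, lintegral_smul_measure, lintegral_dirac]

theorem charFun_discreteLaw (hw : HasSum w 1) (hw0 : ∀ a, 0 ≤ w a) (θ : ℝ) :
    charFun (discreteLaw w V) θ = ∑' a, (w a : ℂ) * Complex.exp (θ * V a * Complex.I) := by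
  have := isProbabilityMeasure_discreteLaw V hw hw0
  have hint : Integrable (fun x : ℝ => Complex.exp (θ * x * Complex.I)) (discreteLaw w V) :=
    Integrable.of_bound (by fun_prop) 1 (Eventually.of_forall fun x => by
      rw [← Complex.ofReal_mul, Complex.norm_exp_ofReal_mul_I])
  rw [charFun_apply_real, discreteLaw, integral_sum_measure hint]
  simp [integral_smul_measure, integral_dirac, ENNReal.toReal_ofReal (hw0 _)]

end DiscreteLaw

section PrimePowers

variable {r : ℝ} {p : ℕ}

variable (r p) in
noncomputable def primePowerWeight : ℕ → ℝ
  | 0 => 1 - 1 / (p - 1 + r)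
  | ν + 1 => (1 - 1 / p) / (p ^ ν * (p - 1 + r))

variable (p) in
def primePowerValue (f : ℕ → ℝ) : ℕ → ℝ
  | 0 => 0
  | ν + 1 => f (p ^ (ν + 1))

theorem hasSum_primePowerWeight_succ (hp : 1 < p) :
    HasSum (fun ν => primePowerWeight r p (ν + 1)) (1 / (p - 1 + r)) := by
  have hp' : (1 : ℝ) < p := by exact_mod_cast hp
  have hgeom := (hasSum_geometric_of_lt_one (r := 1 / (p : ℝ)) (by positivity)
    (by rw [div_lt_one] <;> linarith)).mul_left ((1 - 1 / p) / (p - 1 + r))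
  have hp1 : 1 - 1 / (p : ℝ) ≠ 0 := by
    have : 1 / (p : ℝ) < 1 := by rw [div_lt_one] <;> linarith
    linarith
  have hterm : (fun ν => primePowerWeight r p (ν + 1)) =
      fun ν => (1 - 1 / p) / (p - 1 + r) * (1 / (p : ℝ)) ^ ν := by
    ext ν
    simp only [primePowerWeight, one_div_pow]
    field_simp
  rw [hterm, show 1 / ((p : ℝ) - 1 + r) =
      (1 - 1 / (p : ℝ)) / (p - 1 + r) * (1 - 1 / (p : ℝ))⁻¹ by
    rw [div_mul_eq_mul_div, mul_inv_cancel₀ hp1]]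
  exact hgeom

theorem hasSum_primePowerWeight (hp : 1 < p) : HasSum (primePowerWeight r p) 1 := by
  rw [← hasSum_nat_add_iff' 1, Finset.sum_range_one,
    show 1 - primePowerWeight r p 0 = 1 / (p - 1 + r) from sub_sub_cancel _ _]
  exact hasSum_primePowerWeight_succ hp

theorem primePowerWeight_nonneg (hp : 1 < p) (hr : 0 ≤ r) (ν : ℕ) :
    0 ≤ primePowerWeight r p ν := by
  have hp' : (2 : ℝ) ≤ p := by exact_mod_cast hp
  cases ν with
  | zero =>
    simp only [primePowerWeight, sub_nonneg]
    rw [div_le_one] <;> linarith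
  | succ ν =>
    simp only [primePowerWeight]
    have : 1 / (p : ℝ) ≤ 1 := by rw [div_le_one] <;> linarith
    have : 0 < (p : ℝ) - 1 + r := by linarith
    positivity

theorem primePowerWeight_one_le_one_div (hp : 1 < p) (hr : 0 ≤ r) :
    primePowerWeight r p 1 ≤ 1 / p := by
  have hp' : (1 : ℝ) < p := by exact_mod_cast hp
  simp only [primePowerWeight, pow_zero, one_mul]
  rw [div_le_div_iff₀ (by linarith) (by linarith)]
  field_simp
  nlinarith

theorem hasSum_primePowerWeight_add_two (hp : 1 < p) :
    HasSum (fun ν => primePowerWeight r p (ν + 2)) (1 / (p - 1 + r) / p) := by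
  refine ((hasSum_primePowerWeight_succ hp).div_const (p : ℝ)).congr_fun fun ν => ?_
  simp only [primePowerWeight, pow_succ]
  field_simp

theorem lintegral_min_abs_one_discreteLaw_primePower_le (f : ℕ → ℝ) (hp : 1 < p) (hr : 0 ≤ r) :
    ∫⁻ x, ENNReal.ofReal (min |x| 1) ∂discreteLaw (primePowerWeight r p) (primePowerValue p f)
      ≤ ENNReal.ofReal (min |f p| 1 / p + 2 / p ^ 2) := by
  have hp' : (2 : ℝ) ≤ p := by exact_mod_cast hp
  set w := primePowerWeight r p
  set g : ℕ → ℝ := fun ν => w ν * min |primePowerValue p f ν| 1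
  have hw0 := primePowerWeight_nonneg hp hr
  have hg0 : ∀ ν, 0 ≤ g ν := fun ν => mul_nonneg (hw0 ν) (le_min (abs_nonneg _) zero_le_one)
  have hgw : ∀ ν, g ν ≤ w ν := fun ν => mul_le_of_le_one_right (hw0 ν) (min_le_right _ _)
  have hg : Summable g := (hasSum_primePowerWeight hp).summable.of_nonneg_of_le hg0 hgw
  have htail : ∑' ν, g (ν + 2) ≤ 2 / p ^ 2 := calc
    ∑' ν, g (ν + 2) ≤ ∑' ν, w (ν + 2) :=
      Summable.tsum_le_tsum (fun ν => hgw _) ((summable_nat_add_iff 2).2 hg)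
        (hasSum_primePowerWeight_add_two hp).summable
    _ = 1 / (p - 1 + r) / p := (hasSum_primePowerWeight_add_two hp).tsum_eq
    _ ≤ 2 / p ^ 2 := by
      rw [div_div, div_le_div_iff₀ (by nlinarith) (by positivity)]
      nlinarith
  have hfirst : g 1 ≤ min |f p| 1 / p := calc
    g 1 = w 1 * min |f p| 1 := by simp [g, primePowerValue]
    _ ≤ 1 / p * min |f p| 1 := mul_le_mul_of_nonneg_right (primePowerWeight_one_le_one_div hp hr)
      (le_min (abs_nonneg _) zero_le_one)
    _ = min |f p| 1 / p := one_div_mul_eq_div _ _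
  rw [lintegral_discreteLaw, tsum_congr fun ν => (ENNReal.ofReal_mul (hw0 ν)).symm,
    ← ENNReal.ofReal_tsum_of_nonneg hg0 hg, ← hg.sum_add_tsum_nat_add 2]
  refine ENNReal.ofReal_le_ofReal ?_
  have hzero : g 0 = 0 := by simp [g, primePowerValue]
  rw [Finset.sum_range_succ, Finset.sum_range_one, hzero]
  linarith

theorem charFun_discreteLaw_primePower (f : ℕ → ℝ) (hr : 0 ≤ r) (p : Nat.Primes) (θ : ℝ) :
    charFun (discreteLaw (primePowerWeight r p) (primePowerValue p f)) θ =
      localFactor f r θ p := by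
  have hp := p.2.one_lt
  have hw := hasSum_primePowerWeight (r := r) hp
  rw [charFun_discreteLaw _ hw (primePowerWeight_nonneg hp hr)]
  have hs : Summable fun ν => (primePowerWeight r p ν : ℂ) *
      Complex.exp (θ * primePowerValue p f ν * Complex.I) := by
    refine hw.summable.of_norm_bounded fun ν => ?_
    rw [norm_mul, Complex.norm_real, Real.norm_of_nonneg (primePowerWeight_nonneg hp hr ν),
      ← Complex.ofReal_mul, Complex.norm_exp_ofReal_mul_I, mul_one]
  have hC : HasSum (fun ν => (primePowerWeight r p (ν + 1) : ℂ)) ((1 / (p - 1 + r) : ℝ) : ℂ) :=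
    Complex.hasSum_ofReal.2 (hasSum_primePowerWeight_succ hp)
  have hT := ((summable_nat_add_iff 1).2 hs).hasSum.sub hC
  have hfactor : HasSum (fun ν => (1 - 1 / ((p : ℕ) : ℂ)) *
      ((Complex.exp (θ * f ((p : ℕ) ^ (ν + 1)) * Complex.I) - 1) /
        (((p : ℕ) : ℂ) ^ ν * (((p : ℕ) : ℂ) - 1 + (r : ℂ))))) _ :=
    hT.congr_fun fun ν => by
      simp only [primePowerWeight, primePowerValue]
      push_cast
      ring
  rw [hs.tsum_eq_zero_add, localFactor, ← tsum_mul_left, hfactor.tsum_eq]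
  simp only [primePowerWeight, primePowerValue, Complex.ofReal_zero, mul_zero, zero_mul,
    Complex.exp_zero, mul_one]
  push_cast
  ring

end PrimePowers

theorem summable_min_abs_one_div_prime {f : ℕ → ℝ}
    (hs1 : Summable fun p : Nat.Primes => if 1 < |f p| then 1 / (p : ℝ) else 0)
    (hs3 : Summable fun p : Nat.Primes => if |f p| ≤ 1 then f p / (p : ℝ) else 0) :
    Summable fun p : Nat.Primes => min |f p| 1 / (p : ℝ) := by
  refine (hs3.abs.add hs1).congr fun p => ?_
  by_cases h : |f p| ≤ 1
  · simp [h, not_lt.2 h, abs_div]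
  · simp [h, lt_of_not_ge h, (lt_of_not_ge h).le]

theorem stmt_11_general (f : ℕ → ℝ)
    (hs1 : Summable (fun p : Nat.Primes =>
      if 1 < |f (p : ℕ)| then 1 / ((p : ℕ) : ℝ) else 0))
    (hs3 : Summable (fun p : Nat.Primes =>
      if |f (p : ℕ)| ≤ 1 then f (p : ℕ) / ((p : ℕ) : ℝ) else 0)) :
    ∀ r : ℝ, 0 ≤ r → ∃ μ : Measure ℝ, IsProbabilityMeasure μ ∧
      ∀ θ : ℝ, Multipliable (localFactor f r θ) ∧
        ∏' p : Nat.Primes, localFactor f r θ p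
          = ∫ t : ℝ, Complex.exp (θ * t * Complex.I) ∂μ := by
  intro r hr
  let μ : Nat.Primes → Measure ℝ := fun p =>
    discreteLaw (primePowerWeight r p) (primePowerValue p f)
  have hμ : ∀ p, IsProbabilityMeasure (μ p) := fun p => isProbabilityMeasure_discreteLaw _
    (hasSum_primePowerWeight p.2.one_lt) (primePowerWeight_nonneg p.2.one_lt hr)
  have hbound : Summable fun p : Nat.Primes => min |f p| 1 / (p : ℝ) + 2 / (p : ℝ) ^ 2 :=
    (summable_min_abs_one_div_prime hs1 hs3).add <|
      (((Real.summable_one_div_nat_pow.2 one_lt_two).mul_left 2).comp_injective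
        Subtype.coe_injective).congr fun p => mul_one_div _ _
  have hsum : ∀ᵐ ω ∂Measure.infinitePi μ, Summable ω := by
    refine ae_summable_infinitePi μ (ne_top_of_le_ne_top ?_ (ENNReal.tsum_le_tsum fun p =>
      lintegral_min_abs_one_discreteLaw_primePower_le f p.2.one_lt hr))
    rw [← ENNReal.ofReal_tsum_of_nonneg (fun p => by positivity) hbound]
    exact ENNReal.ofReal_ne_top
  refine ⟨(Measure.infinitePi μ).map fun ω => ∑' p, ω p,
    Measure.isProbabilityMeasure_map (Measurable.tsum measurable_pi_apply).aemeasurable,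
    fun θ => ?_⟩
  have h := hasProd_charFun_map_tsum_infinitePi μ hsum θ
  simp only [μ, charFun_discreteLaw_primePower f hr] at h
  exact ⟨h.multipliable, by rw [h.tprod_eq, charFun_apply_real]⟩

/-- If the additive function `f` satisfies the Erdős–Wintner three-series condition, then
for each `r ≥ 0` the product `φ_{F_r}(θ) = ∏_p (1 + (1−1/p) ∑_{ν≥1} (e^{iθf(p^ν)}−1)/
(p^{ν−1}(p−1+r)))` converges for every real `θ` and is the characteristic function of a
probability distribution `F_r` on `ℝ`. -/
theorem stmt_11 (f : ℕ → ℝ)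
    (hadd : ∀ m n : ℕ, 1 ≤ m → 1 ≤ n → Nat.Coprime m n → f (m * n) = f m + f n)
    (hs1 : Summable (fun p : Nat.Primes =>
      if 1 < |f (p : ℕ)| then 1 / ((p : ℕ) : ℝ) else 0))
    (hs2 : Summable (fun p : Nat.Primes =>
      if |f (p : ℕ)| ≤ 1 then f (p : ℕ) ^ 2 / ((p : ℕ) : ℝ) else 0))
    (hs3 : Summable (fun p : Nat.Primes =>
      if |f (p : ℕ)| ≤ 1 then f (p : ℕ) / ((p : ℕ) : ℝ) else 0)) :
    ∀ r : ℝ, 0 ≤ r → ∃ μ : Measure ℝ, IsProbabilityMeasure μ ∧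
      ∀ θ : ℝ, Multipliable (localFactor f r θ) ∧
        ∏' p : Nat.Primes, localFactor f r θ p
          = ∫ t : ℝ, Complex.exp (θ * t * Complex.I) ∂μ :=
  stmt_11_general f hs1 hs3
end
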